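/- Let S be an idempotent semifield and g, h ∈ S with |g| = g + g⁻¹ and |h| = h + h⁻¹. Then for any kernel K of S, |g||h| ∈ K if and only if |g| + |h| ∈ K. Consequently, the product of two principal kernels is principal: ⟨f⟩ · ⟨g⟩ = ⟨|f| · |g|⟩ = ⟨|f| + |g|⟩. -/
import Mathlib


/-- An idempotent semifield structure on a multiplicative abelian group `S`:
a commutative, associative, idempotent addition over which multiplication
distributes. The induced order is `a ≤ b ↔ a + b = b`. -/
structure IdemSemifieldStr (S : Type*) [CommGroup S] where
  add : S → S → S
  add_comm : ∀ a b, add a b = add b a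
  add_assoc : ∀ a b c, add (add a b) c = add a (add b c)
  add_idem : ∀ a, add a a = a
  mul_dist : ∀ g a b, g * add a b = add (g * a) (g * b)

namespace IdemSemifieldStr

variable {S : Type*} [CommGroup S] (A : IdemSemifieldStr S)

/-- The lattice order: `a ≤ b` iff `a + b = b`. -/
def le (a b : S) : Prop := A.add a b = b

/-- The norm `|a| = a + a⁻¹`. -/
def abs (a : S) : S := A.add a a⁻¹

/-- A kernel: a convex multiplicative subgroup. -/
def IsKernel (K : Set S) : Prop :=
  (1 : S) ∈ K ∧ (∀ a ∈ K, ∀ b ∈ K, a * b ∈ K) ∧ (∀ a ∈ K, a⁻¹ ∈ K) ∧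
  (∀ a ∈ K, ∀ b ∈ K, ∀ α β : S, A.add α β = 1 → A.add (α * a) (β * b) ∈ K)

/-- The kernel generated by a set: the intersection of all kernels containing it. -/
def kgen (T : Set S) : Set S := ⋂₀ {K : Set S | A.IsKernel K ∧ T ⊆ K}

end IdemSemifieldStr

namespace IdemSemifieldStr

variable {S : Type*} [CommGroup S] {A : IdemSemifieldStr S}

lemma le_rfl' (a : S) : A.le a a := A.add_idem a

lemma le_trans' {a b c : S} (h1 : A.le a b) (h2 : A.le b c) : A.le a c := by
  unfold le at *; rw [← h2, ← A.add_assoc, h1]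

lemma le_add_left (a b : S) : A.le a (A.add a b) := by
  unfold le; rw [← A.add_assoc, A.add_idem]

lemma le_add_right (a b : S) : A.le b (A.add a b) := by
  unfold le; rw [A.add_comm a b, ← A.add_assoc, A.add_idem]

lemma add_le' {a b c : S} (h1 : A.le a c) (h2 : A.le b c) : A.le (A.add a b) c := by
  unfold le at *; rw [A.add_assoc, h2, h1]

lemma add_mono {a b c d : S} (h1 : A.le a b) (h2 : A.le c d) :
    A.le (A.add a c) (A.add b d) :=
  add_le' (le_trans' h1 (le_add_left b d)) (le_trans' h2 (le_add_right b d))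

lemma mul_le_mul_left'' (c : S) {a b : S} (h : A.le a b) : A.le (c * a) (c * b) := by
  unfold le at *; rw [← A.mul_dist, h]

lemma le_of_mul_le {c a b : S} (h : A.le (c * a) (c * b)) : A.le a b := by
  have := mul_le_mul_left'' (A := A) c⁻¹ h
  simpa using this

lemma inv_le_inv'' {a b : S} (h : A.le a b) : A.le b⁻¹ a⁻¹ := by
  have := mul_le_mul_left'' (A := A) (a⁻¹ * b⁻¹) h
  have e1 : a⁻¹ * b⁻¹ * a = b⁻¹ := by
    rw [mul_comm a⁻¹ b⁻¹, mul_assoc, inv_mul_cancel, mul_one]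
  have e2 : a⁻¹ * b⁻¹ * b = a⁻¹ := by rw [mul_assoc, inv_mul_cancel, mul_one]
  rwa [e1, e2] at this

lemma mul_mono {a b c d : S} (h1 : A.le a b) (h2 : A.le c d) : A.le (a * c) (b * d) :=
  le_trans' (by rw [mul_comm a c, mul_comm b c]; exact mul_le_mul_left'' c h1)
    (mul_le_mul_left'' b h2)

lemma add_mul' (a b c : S) : (A.add a b) * c = A.add (a * c) (b * c) := by
  rw [mul_comm, A.mul_dist, mul_comm c a, mul_comm c b]

lemma add_mul_add (a b c d : S) :
    (A.add a b) * (A.add c d) = A.add (A.add (a*c) (b*c)) (A.add (a*d) (b*d)) := by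
  rw [A.mul_dist, add_mul', add_mul']

/-- Meet defined via inverses. -/
def meet (A : IdemSemifieldStr S) (a b : S) : S := (A.add a⁻¹ b⁻¹)⁻¹

lemma meet_le_left (a b : S) : A.le (A.meet a b) a := by
  have := inv_le_inv'' (A := A) (le_add_left a⁻¹ b⁻¹)
  simpa [meet] using this

lemma meet_le_right (a b : S) : A.le (A.meet a b) b := by
  have := inv_le_inv'' (A := A) (le_add_right a⁻¹ b⁻¹)
  simpa [meet] using this

lemma le_meet {c a b : S} (h1 : A.le c a) (h2 : A.le c b) : A.le c (A.meet a b) := by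
  have := inv_le_inv'' (A := A) (add_le' (inv_le_inv'' h1) (inv_le_inv'' h2))
  simpa [meet] using this

lemma mul_meet (c a b : S) : c * A.meet a b = A.meet (c * a) (c * b) := by
  unfold meet
  rw [mul_inv c a, mul_inv c b, ← A.mul_dist, mul_inv, inv_inv]

lemma le_one_of_sq_le_one {b : S} (h : A.le (b * b) 1) : A.le b 1 := by
  have hc : A.add b 1 * A.add b 1 = A.add b 1 := by
    rw [add_mul_add, mul_one, one_mul, one_mul]
    -- add (add (b*b) b) (add b 1) = add b 1
    rw [A.add_assoc, ← A.add_assoc b b, A.add_idem]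
    -- add (b*b) (add b 1)
    rw [← A.add_assoc, A.add_comm (b*b) b, A.add_assoc, A.add_comm (b*b) 1,
      show A.add 1 (b*b) = 1 from by rw [A.add_comm]; exact h]
  have : A.add b 1 = 1 := by
    have := mul_left_cancel (a := A.add b 1) (b := A.add b 1) (c := 1)
      (by rw [hc, mul_one])
    exact this
  exact this

lemma one_le_abs (a : S) : A.le 1 (A.abs a) := by
  have hsq : A.le 1 (A.abs a * A.abs a) := by
    unfold abs
    rw [add_mul_add]
    have h1 : A.le 1 (A.add (a * a) (a⁻¹ * a)) := by
      rw [inv_mul_cancel]; exact le_add_right _ _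
    exact le_trans' h1 (le_add_left _ _)
  have hinv : A.le ((A.abs a)⁻¹ * (A.abs a)⁻¹) 1 := by
    have := inv_le_inv'' hsq
    simpa [mul_inv] using this
  have h2 : A.le (A.abs a)⁻¹ 1 := le_one_of_sq_le_one hinv
  have := inv_le_inv'' h2
  simpa using this

lemma le_abs_self' (a : S) : A.le a (A.abs a) := le_add_left a a⁻¹

lemma inv_le_abs' (a : S) : A.le a⁻¹ (A.abs a) := le_add_right a a⁻¹

lemma abs_inv_le (a : S) : A.le (A.abs a)⁻¹ a := by
  have := inv_le_inv'' (inv_le_abs' (A := A) a)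
  simpa using this

lemma IsKernel.one_mem {K : Set S} (hK : A.IsKernel K) : (1 : S) ∈ K := hK.1

lemma IsKernel.mul_mem {K : Set S} (hK : A.IsKernel K) {a b : S} (ha : a ∈ K)
    (hb : b ∈ K) : a * b ∈ K := hK.2.1 a ha b hb

lemma IsKernel.inv_mem {K : Set S} (hK : A.IsKernel K) {a : S} (ha : a ∈ K) :
    a⁻¹ ∈ K := hK.2.2.1 a ha

lemma IsKernel.add_mem {K : Set S} (hK : A.IsKernel K) {a b : S} (ha : a ∈ K)
    (hb : b ∈ K) : A.add a b ∈ K := by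
  have := hK.2.2.2 a ha b hb 1 1 (A.add_idem 1)
  simpa using this

lemma IsKernel.abs_mem {K : Set S} (hK : A.IsKernel K) {a : S} (ha : a ∈ K) :
    A.abs a ∈ K := hK.add_mem ha (hK.inv_mem ha)

lemma IsKernel.mem_of_one_le {K : Set S} (hK : A.IsKernel K) {b x : S} (hb : b ∈ K)
    (h1 : A.le 1 x) (h2 : A.le x b) : x ∈ K := by
  have hαβ : A.add (x * b⁻¹) 1 = 1 := by
    have := mul_le_mul_left'' (A := A) b⁻¹ h2
    rw [inv_mul_cancel] at this
    rwa [mul_comm x b⁻¹]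
  have hmem := hK.2.2.2 b hb 1 hK.1 (x * b⁻¹) 1 hαβ
  have e : A.add (x * b⁻¹ * b) (1 * 1) = x := by
    rw [show x * b⁻¹ * b = x from by group, one_mul, A.add_comm]
    exact h1
  rwa [e] at hmem

lemma IsKernel.mem_of_between {K : Set S} (hK : A.IsKernel K) {a b x : S} (ha : a ∈ K)
    (hb : b ∈ K) (h1 : A.le a x) (h2 : A.le x b) : x ∈ K := by
  have hle1 : A.le 1 (x * a⁻¹) := by
    have := mul_le_mul_left'' (A := A) a⁻¹ h1
    rw [inv_mul_cancel, mul_comm] at this; exact this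
  have hle2 : A.le (x * a⁻¹) (b * a⁻¹) := by
    rw [mul_comm x a⁻¹, mul_comm b a⁻¹]; exact mul_le_mul_left'' a⁻¹ h2
  have hmem : x * a⁻¹ ∈ K := hK.mem_of_one_le (hK.mul_mem hb (hK.inv_mem ha)) hle1 hle2
  have := hK.mul_mem hmem ha
  rwa [show x * a⁻¹ * a = x from by group] at this

/-- Riesz decomposition: if `1 ≤ x ≤ a*b` with `a ∈ K₁`, `b ∈ K₂`, then
`x` is a product of elements of `K₁` and `K₂`. -/
lemma riesz {K1 K2 : Set S} (h1 : A.IsKernel K1) (h2 : A.IsKernel K2)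
    {a b x : S} (ha : a ∈ K1) (hb : b ∈ K2) (hx1 : A.le 1 x) (hx2 : A.le x (a * b)) :
    x ∈ Set.image2 (· * ·) K1 K2 := by
  set a1 := A.add a 1 with ha1def
  set b1 := A.add b 1 with hb1def
  have h1a1 : A.le 1 a1 := le_add_right a 1
  have h1b1 : A.le 1 b1 := le_add_right b 1
  have ha1K : a1 ∈ K1 :=
    h1.mem_of_between h1.one_mem (h1.abs_mem ha) h1a1
      (add_le' (le_abs_self' a) (one_le_abs a))
  have hb1K : b1 ∈ K2 :=
    h2.mem_of_between h2.one_mem (h2.abs_mem hb) h1b1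
      (add_le' (le_abs_self' b) (one_le_abs b))
  have hx2' : A.le x (a1 * b1) :=
    le_trans' hx2 (mul_mono (le_add_left a 1) (le_add_left b 1))
  set a' := A.meet x a1 with ha'def
  have h1a' : A.le 1 a' := le_meet hx1 h1a1
  have ha'K : a' ∈ K1 := h1.mem_of_between h1.one_mem ha1K h1a' (meet_le_right x a1)
  set b' := x * a'⁻¹ with hb'def
  have h1b' : A.le 1 b' := by
    have := mul_le_mul_left'' (A := A) a'⁻¹ (meet_le_left x a1)
    rw [inv_mul_cancel, mul_comm] at this; exact this
  have hb'le : A.le b' b1 := by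
    have hxle : A.le x (b1 * a') := by
      rw [ha'def, mul_meet]
      refine le_meet ?_ ?_
      · have : A.le (1 * x) (b1 * x) := mul_mono h1b1 (le_rfl' x)
        rwa [one_mul] at this
      · rwa [mul_comm a1 b1] at hx2'
    have := mul_le_mul_left'' (A := A) a'⁻¹ hxle
    rw [show a'⁻¹ * (b1 * a') = b1 from by
      rw [mul_comm b1 a', ← mul_assoc, inv_mul_cancel, one_mul], mul_comm a'⁻¹ x] at this
    exact this
  have hb'K : b' ∈ K2 := h2.mem_of_between h2.one_mem hb1K h1b' hb'le
  exact ⟨a', ha'K, b', hb'K, by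
    show a' * (x * a'⁻¹) = x
    rw [mul_comm x a'⁻¹, ← mul_assoc, mul_inv_cancel, one_mul]⟩

lemma image2_isKernel {K1 K2 : Set S} (h1 : A.IsKernel K1) (h2 : A.IsKernel K2) :
    A.IsKernel (Set.image2 (· * ·) K1 K2) := by
  refine ⟨⟨1, h1.one_mem, 1, h2.one_mem, by simp⟩, ?_, ?_, ?_⟩
  · rintro _ ⟨a1, ha1, b1, hb1, rfl⟩ _ ⟨a2, ha2, b2, hb2, rfl⟩
    exact ⟨a1 * a2, h1.mul_mem ha1 ha2, b1 * b2, h2.mul_mem hb1 hb2,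
      mul_mul_mul_comm a1 a2 b1 b2⟩
  · rintro _ ⟨a1, ha1, b1, hb1, rfl⟩
    exact ⟨a1⁻¹, h1.inv_mem ha1, b1⁻¹, h2.inv_mem hb1, (mul_inv a1 b1).symm⟩
  · rintro _ ⟨a1, ha1, b1, hb1, rfl⟩ _ ⟨a2, ha2, b2, hb2, rfl⟩ α β hαβ
    set D1 := A.abs a1 * A.abs a2 with hD1
    set D2 := A.abs b1 * A.abs b2 with hD2
    set D := D1 * D2 with hD
    have hD1K : D1 ∈ K1 := h1.mul_mem (h1.abs_mem ha1) (h1.abs_mem ha2)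
    have hD2K : D2 ∈ K2 := h2.mul_mem (h2.abs_mem hb1) (h2.abs_mem hb2)
    have h1D1 : A.le 1 D1 := by
      have := mul_mono (one_le_abs (A := A) a1) (one_le_abs (A := A) a2)
      rwa [one_mul] at this
    have h1D2 : A.le 1 D2 := by
      have := mul_mono (one_le_abs (A := A) b1) (one_le_abs (A := A) b2)
      rwa [one_mul] at this
    have h1D : A.le 1 D := by
      have := mul_mono h1D1 h1D2; rwa [one_mul] at this
    set y := A.add (α * (a1 * b1)) (β * (a2 * b2)) with hy
    -- bounds on p = a1*b1 and q = a2*b2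
    have hpD : A.le (a1 * b1) D := by
      have hstep : A.le (a1 * b1) (A.abs a1 * A.abs b1) :=
        mul_mono (le_abs_self' a1) (le_abs_self' b1)
      have hstep2 : A.le (A.abs a1 * A.abs b1) D := by
        have := mul_mono (mul_mono (le_rfl' (A := A) (A.abs a1)) (one_le_abs (A := A) a2))
          (mul_mono (le_rfl' (A := A) (A.abs b1)) (one_le_abs (A := A) b2))
        rw [mul_one, mul_one] at this
        rwa [hD, hD1, hD2, show A.abs a1 * A.abs a2 * (A.abs b1 * A.abs b2)
          = A.abs a1 * A.abs a2 * (A.abs b1 * A.abs b2) from rfl]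
      exact le_trans' hstep hstep2
    have hqD : A.le (a2 * b2) D := by
      have hstep : A.le (a2 * b2) (A.abs a2 * A.abs b2) :=
        mul_mono (le_abs_self' a2) (le_abs_self' b2)
      have hstep2 : A.le (A.abs a2 * A.abs b2) D := by
        have := mul_mono (mul_mono (one_le_abs (A := A) a1) (le_rfl' (A := A) (A.abs a2)))
          (mul_mono (one_le_abs (A := A) b1) (le_rfl' (A := A) (A.abs b2)))
        rw [one_mul, one_mul] at this
        exact this
      exact le_trans' hstep hstep2
    have hDp : A.le D⁻¹ (a1 * b1) := by
      have habs : A.le (A.abs a1)⁻¹ a1 := abs_inv_le a1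
      have hbabs : A.le (A.abs b1)⁻¹ b1 := abs_inv_le b1
      have hd : A.le D⁻¹ ((A.abs a1)⁻¹ * (A.abs b1)⁻¹) := by
        have h' : A.le (A.abs a1 * A.abs b1) D := by
          have := mul_mono (mul_mono (le_rfl' (A := A) (A.abs a1)) (one_le_abs (A := A) a2))
            (mul_mono (le_rfl' (A := A) (A.abs b1)) (one_le_abs (A := A) b2))
          rw [mul_one, mul_one] at this
          exact this
        have := inv_le_inv'' h'
        rwa [mul_inv (A.abs a1) (A.abs b1)] at this
      exact le_trans' hd (mul_mono habs hbabs)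
    have hDq : A.le D⁻¹ (a2 * b2) := by
      have habs : A.le (A.abs a2)⁻¹ a2 := abs_inv_le a2
      have hbabs : A.le (A.abs b2)⁻¹ b2 := abs_inv_le b2
      have hd : A.le D⁻¹ ((A.abs a2)⁻¹ * (A.abs b2)⁻¹) := by
        have h' : A.le (A.abs a2 * A.abs b2) D := by
          have := mul_mono (mul_mono (one_le_abs (A := A) a1) (le_rfl' (A := A) (A.abs a2)))
            (mul_mono (one_le_abs (A := A) b1) (le_rfl' (A := A) (A.abs b2)))
          rw [one_mul, one_mul] at this
          exact this
        have := inv_le_inv'' h'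
        rwa [mul_inv (A.abs a2) (A.abs b2)] at this
      exact le_trans' hd (mul_mono habs hbabs)
    have hα1 : A.le α 1 := by
      have := le_add_left (A := A) α β; rwa [hαβ] at this
    have hβ1 : A.le β 1 := by
      have := le_add_right (A := A) α β; rwa [hαβ] at this
    have hyD : A.le y D := by
      refine add_le' ?_ ?_
      · have := mul_mono hα1 hpD; rwa [one_mul] at this
      · have := mul_mono hβ1 hqD; rwa [one_mul] at this
    have hDy : A.le D⁻¹ y := by
      have h1' : A.le (α * D⁻¹) (α * (a1 * b1)) := mul_le_mul_left'' α hDp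
      have h2' : A.le (β * D⁻¹) (β * (a2 * b2)) := mul_le_mul_left'' β hDq
      have := add_mono h1' h2'
      rw [show A.add (α * D⁻¹) (β * D⁻¹) = (A.add α β) * D⁻¹ from (add_mul' α β D⁻¹).symm,
        hαβ, one_mul] at this
      exact this
    -- now 1 ≤ y*D ≤ D*D
    have hyD1 : A.le 1 (y * D) := by
      have := mul_mono hDy (le_rfl' (A := A) D)
      rwa [inv_mul_cancel] at this
    have hyD2 : A.le (y * D) ((D1 * D1) * (D2 * D2)) := by
      have := mul_mono hyD (le_rfl' (A := A) D)
      rwa [show D * D = (D1 * D1) * (D2 * D2) from by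
        rw [hD]; exact mul_mul_mul_comm D1 D2 D1 D2] at this
    obtain ⟨u, huK, v, hvK, huv⟩ :=
      riesz h1 h2 (h1.mul_mem hD1K hD1K) (h2.mul_mem hD2K hD2K) hyD1 hyD2
    refine ⟨u * D1⁻¹, h1.mul_mem huK (h1.inv_mem hD1K),
      v * D2⁻¹, h2.mul_mem hvK (h2.inv_mem hD2K), ?_⟩
    have : u * v = y * D := huv
    simp only
    rw [show u * D1⁻¹ * (v * D2⁻¹) = (u * v) * (D1 * D2)⁻¹ from by
      rw [mul_inv D1 D2]; exact mul_mul_mul_comm u D1⁻¹ v D2⁻¹, this, ← hD]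
    exact mul_inv_cancel_right y D

lemma kgen_isKernel (A : IdemSemifieldStr S) (T : Set S) : A.IsKernel (A.kgen T) := by
  refine ⟨?_, ?_, ?_, ?_⟩
  · exact fun K hK => hK.1.one_mem
  · intro a ha b hb K hK
    exact hK.1.mul_mem (ha K hK) (hb K hK)
  · intro a ha K hK
    exact hK.1.inv_mem (ha K hK)
  · intro a ha b hb α β hαβ K hK
    exact hK.1.2.2.2 a (ha K hK) b (hb K hK) α β hαβ

lemma subset_kgen (A : IdemSemifieldStr S) (T : Set S) : T ⊆ A.kgen T :=
  fun x hx K hK => hK.2 hx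

lemma kgen_subset {K : Set S} (hK : A.IsKernel K) {T : Set S} (hT : T ⊆ K) :
    A.kgen T ⊆ K := fun _ hx => hx K ⟨hK, hT⟩

end IdemSemifieldStr

open IdemSemifieldStr in
/-- `|g||h| ∈ K ↔ |g| + |h| ∈ K` for any kernel K; consequently the product of
two principal kernels is principal: ⟨g⟩⟨h⟩ = ⟨|g||h|⟩ = ⟨|g| + |h|⟩. -/
theorem abs_prod_add_kernel {S : Type*} [CommGroup S]
    (A : IdemSemifieldStr S) (g h : S) :
    (∀ K : Set S, A.IsKernel K →
      (A.abs g * A.abs h ∈ K ↔ A.add (A.abs g) (A.abs h) ∈ K)) ∧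
    Set.image2 (· * ·) (A.kgen {g}) (A.kgen {h}) = A.kgen {A.abs g * A.abs h} ∧
    A.kgen {A.abs g * A.abs h} = A.kgen {A.add (A.abs g) (A.abs h)} := by
  have h1g : A.le 1 (A.abs g) := one_le_abs g
  have h1h : A.le 1 (A.abs h) := one_le_abs h
  have h1p : A.le 1 (A.abs g * A.abs h) := by
    have := mul_mono h1g h1h; rwa [one_mul] at this
  have hgle : A.le (A.abs g) (A.abs g * A.abs h) := by
    have := mul_mono (le_rfl' (A := A) (A.abs g)) h1h; rwa [mul_one] at this
  have hhle : A.le (A.abs h) (A.abs g * A.abs h) := by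
    have := mul_mono h1g (le_rfl' (A := A) (A.abs h)); rwa [one_mul] at this
  have hsum_le : A.le (A.add (A.abs g) (A.abs h)) (A.abs g * A.abs h) :=
    add_le' hgle hhle
  have h1sum : A.le 1 (A.add (A.abs g) (A.abs h)) :=
    le_trans' h1g (le_add_left _ _)
  have hprod_le_sq : A.le (A.abs g * A.abs h)
      (A.add (A.abs g) (A.abs h) * A.add (A.abs g) (A.abs h)) := by
    rw [add_mul_add]
    exact le_trans' (le_add_left (A.abs g * A.abs h) (A.abs h * A.abs h))
      (le_add_right _ _)
  have key : ∀ K : Set S, A.IsKernel K →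
      (A.abs g * A.abs h ∈ K ↔ A.add (A.abs g) (A.abs h) ∈ K) := by
    intro K hK
    constructor
    · intro hm
      exact hK.mem_of_one_le hm h1sum hsum_le
    · intro hs
      exact hK.mem_of_one_le (hK.mul_mem hs hs) h1p hprod_le_sq
  -- elements of kernels containing the product
  have habs_in : ∀ K : Set S, A.IsKernel K → A.abs g * A.abs h ∈ K →
      g ∈ K ∧ h ∈ K := by
    intro K hK hm
    have hag : A.abs g ∈ K := hK.mem_of_one_le hm h1g hgle
    have hah : A.abs h ∈ K := hK.mem_of_one_le hm h1h hhle
    exact ⟨hK.mem_of_between (hK.inv_mem hag) hag (abs_inv_le g) (le_abs_self' g),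
      hK.mem_of_between (hK.inv_mem hah) hah (abs_inv_le h) (le_abs_self' h)⟩
  refine ⟨key, ?_, ?_⟩
  · -- image2 equality
    apply Set.Subset.antisymm
    · rintro _ ⟨a, haK, b, hbK, rfl⟩
      intro K hKmem
      obtain ⟨hK, hsub⟩ := hKmem
      have hm : A.abs g * A.abs h ∈ K := hsub rfl
      obtain ⟨hgK, hhK⟩ := habs_in K hK hm
      exact hK.mul_mem (haK K ⟨hK, Set.singleton_subset_iff.2 hgK⟩)
        (hbK K ⟨hK, Set.singleton_subset_iff.2 hhK⟩)
    · have hker : A.IsKernel (Set.image2 (· * ·) (A.kgen {g}) (A.kgen {h})) :=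
        image2_isKernel (kgen_isKernel A {g}) (kgen_isKernel A {h})
      refine kgen_subset hker (Set.singleton_subset_iff.2 ?_)
      refine ⟨A.abs g, ?_, A.abs h, ?_, rfl⟩
      · intro K hKmem
        exact hKmem.1.abs_mem (hKmem.2 rfl)
      · intro K hKmem
        exact hKmem.1.abs_mem (hKmem.2 rfl)
  · -- kgen equality
    apply Set.Subset.antisymm
    · refine kgen_subset (kgen_isKernel A _) (Set.singleton_subset_iff.2 ?_)
      intro K hKmem
      exact (key K hKmem.1).2 (hKmem.2 rfl)
    · refine kgen_subset (kgen_isKernel A _) (Set.singleton_subset_iff.2 ?_)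
      intro K hKmem
      exact (key K hKmem.1).1 (hKmem.2 rfl)
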